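/- arXiv:2005.11632 — 3 statements merged into one kernel-verified Lean document; each statement's English description precedes it below -/
import Mathlib

section
/- Let ρ_1, ρ_2, ρ_3 > 0, r_1, r_2, r_3 ≥ 0, R_1, R_2, R_3 ≥ 0, S_{12}, S_{13}, S_{23} ≥ 0 be real numbers, and for a unit vector v̂ ∈ S² define m̄_a(k) = ρ_a k − r_a and f(k) = m̄_1 m̄_2 m̄_3 − Σ_a (∏_{b≠a} m̄_b) R_a v̂_a² − Σ_{a<b} m̄_c S_{ab} v̂_a² v̂_b² (where c is the index complementary to {a,b}). Suppose m̄_a(1) > 0 for all a and f(1) ≥ 0, and in f all coefficients satisfy R_a, S_{ab} ≥ 0. Then f(k) > 0 for all k > 1. -/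
/-! Write `F(m) = m₁m₂m₃ − Σ_a (∏_{b≠a} m_b) x_a − Σ_{a<b} m_c y_{ab}` with `x, y ≥ 0`. Since `F` is
multilinear in `m`, `F(a + d)` is `F(a)` plus a polynomial in `d` whose coefficients are the partial
derivatives of `F` at `a`. Multiplying such a derivative by the complementary product of the
(positive) `a_b` turns it into `F(a)` plus nonnegative terms, so all derivatives are nonnegative
when `F(a) ≥ 0`, and `F(a + d) ≥ F(a) + d₁d₂d₃`. Apply this with `a_i = m̄_i(1)`,
`d_i = ρ_i (k − 1)`. -/

def cubicForm (x₁ x₂ x₃ y₁₂ y₁₃ y₂₃ m₁ m₂ m₃ : ℝ) : ℝ :=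
  m₁ * m₂ * m₃ - (m₂ * m₃ * x₁ + m₁ * m₃ * x₂ + m₁ * m₂ * x₃)
    - (m₃ * y₁₂ + m₂ * y₁₃ + m₁ * y₂₃)

theorem cubicForm_add_ge {x₁ x₂ x₃ y₁₂ y₁₃ y₂₃ a₁ a₂ a₃ d₁ d₂ d₃ : ℝ}
    (hx₁ : 0 ≤ x₁) (hx₂ : 0 ≤ x₂) (hx₃ : 0 ≤ x₃)
    (hy₁₂ : 0 ≤ y₁₂) (hy₁₃ : 0 ≤ y₁₃) (hy₂₃ : 0 ≤ y₂₃)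
    (ha₁ : 0 < a₁) (ha₂ : 0 < a₂) (ha₃ : 0 < a₃)
    (hd₁ : 0 ≤ d₁) (hd₂ : 0 ≤ d₂) (hd₃ : 0 ≤ d₃)
    (hF : 0 ≤ cubicForm x₁ x₂ x₃ y₁₂ y₁₃ y₂₃ a₁ a₂ a₃) :
    cubicForm x₁ x₂ x₃ y₁₂ y₁₃ y₂₃ a₁ a₂ a₃ + d₁ * d₂ * d₃ ≤
      cubicForm x₁ x₂ x₃ y₁₂ y₁₃ y₂₃ (a₁ + d₁) (a₂ + d₂) (a₃ + d₃) := by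
  unfold cubicForm at hF ⊢
  have ha₁₂ := mul_pos ha₁ ha₂
  have ha₁₃ := mul_pos ha₁ ha₃
  have ha₂₃ := mul_pos ha₂ ha₃
  have hx₁' := mul_nonneg ha₂₃.le hx₁
  have hx₂' := mul_nonneg ha₁₃.le hx₂
  have hx₃' := mul_nonneg ha₁₂.le hx₃
  have hy₁₂' := mul_nonneg ha₃.le hy₁₂
  have hy₁₃' := mul_nonneg ha₂.le hy₁₃
  have hy₂₃' := mul_nonneg ha₁.le hy₂₃
  have hD₁ : 0 ≤ a₂ * a₃ - a₃ * x₂ - a₂ * x₃ - y₂₃ :=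
    nonneg_of_mul_nonneg_right (by linear_combination hF + hx₁' + hy₁₂' + hy₁₃') ha₁
  have hD₂ : 0 ≤ a₁ * a₃ - a₃ * x₁ - a₁ * x₃ - y₁₃ :=
    nonneg_of_mul_nonneg_right (by linear_combination hF + hx₂' + hy₁₂' + hy₂₃') ha₂
  have hD₃ : 0 ≤ a₁ * a₂ - a₂ * x₁ - a₁ * x₂ - y₁₂ :=
    nonneg_of_mul_nonneg_right (by linear_combination hF + hx₃' + hy₁₃' + hy₂₃') ha₃
  have hD₁₂ : 0 ≤ a₃ - x₃ :=
    nonneg_of_mul_nonneg_right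
      (by linear_combination hF + hx₁' + hx₂' + hy₁₂' + hy₁₃' + hy₂₃') ha₁₂
  have hD₁₃ : 0 ≤ a₂ - x₂ :=
    nonneg_of_mul_nonneg_right
      (by linear_combination hF + hx₁' + hx₃' + hy₁₂' + hy₁₃' + hy₂₃') ha₁₃
  have hD₂₃ : 0 ≤ a₁ - x₁ :=
    nonneg_of_mul_nonneg_right
      (by linear_combination hF + hx₂' + hx₃' + hy₁₂' + hy₁₃' + hy₂₃') ha₂₃
  linear_combination mul_nonneg hd₁ hD₁ + mul_nonneg hd₂ hD₂ + mul_nonneg hd₃ hD₃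
    + mul_nonneg (mul_nonneg hd₁ hd₂) hD₁₂ + mul_nonneg (mul_nonneg hd₁ hd₃) hD₁₃
    + mul_nonneg (mul_nonneg hd₂ hd₃) hD₂₃

theorem stmt_4_general (ρ1 ρ2 ρ3 r1 r2 r3 R1 R2 R3 S12 S13 S23 v1 v2 v3 : ℝ)
    (hρ1 : 0 < ρ1) (hρ2 : 0 < ρ2) (hρ3 : 0 < ρ3)
    (hR1 : 0 ≤ R1) (hR2 : 0 ≤ R2) (hR3 : 0 ≤ R3)
    (hS12 : 0 ≤ S12) (hS13 : 0 ≤ S13) (hS23 : 0 ≤ S23)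
    (m1 m2 m3 f : ℝ → ℝ)
    (hm1 : ∀ k, m1 k = ρ1 * k - r1)
    (hm2 : ∀ k, m2 k = ρ2 * k - r2)
    (hm3 : ∀ k, m3 k = ρ3 * k - r3)
    (hfdef : ∀ k, f k =
      m1 k * m2 k * m3 k
        - (m2 k * m3 k * R1 * v1 ^ 2 + m1 k * m3 k * R2 * v2 ^ 2
            + m1 k * m2 k * R3 * v3 ^ 2)
        - (m3 k * S12 * v1 ^ 2 * v2 ^ 2 + m2 k * S13 * v1 ^ 2 * v3 ^ 2
            + m1 k * S23 * v2 ^ 2 * v3 ^ 2))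
    (hm1pos : 0 < m1 1) (hm2pos : 0 < m2 1) (hm3pos : 0 < m3 1)
    (hf1 : 0 ≤ f 1) :
    ∀ k > (1 : ℝ), 0 < f k := by
  intro k hk
  have hf : ∀ k, f k = cubicForm (R1 * v1 ^ 2) (R2 * v2 ^ 2) (R3 * v3 ^ 2)
      (S12 * (v1 ^ 2 * v2 ^ 2)) (S13 * (v1 ^ 2 * v3 ^ 2)) (S23 * (v2 ^ 2 * v3 ^ 2))
      (m1 k) (m2 k) (m3 k) := fun k => by rw [hfdef]; unfold cubicForm; ring
  have hshift : ∀ {m : ℝ → ℝ} {ρ r : ℝ}, (∀ k, m k = ρ * k - r) → m k = m 1 + ρ * (k - 1) :=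
    fun hm => by rw [hm, hm]; ring
  have hk₀ : 0 < k - 1 := by linarith
  have key := cubicForm_add_ge (by positivity) (by positivity) (by positivity)
    (by positivity) (by positivity) (by positivity) hm1pos hm2pos hm3pos
    (mul_pos hρ1 hk₀).le (mul_pos hρ2 hk₀).le (mul_pos hρ3 hk₀).le (hf 1 ▸ hf1)
  rw [← hshift hm1, ← hshift hm2, ← hshift hm3, ← hf, ← hf] at key
  have hcube : 0 < ρ1 * (k - 1) * (ρ2 * (k - 1)) * (ρ3 * (k - 1)) := by positivity
  linarith

/-- With `m̄_a(k) = ρ_a k − r_a` (`ρ_a > 0`, `r_a ≥ 0`),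
coefficients `R_a ≥ 0`, `S_{ab} ≥ 0`, and a unit vector `v̂`, the cubic
`f(k) = m̄₁m̄₂m̄₃ − Σ_a (∏_{b≠a} m̄_b) R_a v̂_a² − Σ_{a<b} m̄_c S_{ab} v̂_a² v̂_b²`
satisfies `f(k) > 0` for all `k > 1` whenever `m̄_a(1) > 0` for all `a` and
`f(1) ≥ 0`. -/
theorem stmt_4 (ρ1 ρ2 ρ3 r1 r2 r3 R1 R2 R3 S12 S13 S23 v1 v2 v3 : ℝ)
    (hρ1 : 0 < ρ1) (hρ2 : 0 < ρ2) (hρ3 : 0 < ρ3)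
    (hr1 : 0 ≤ r1) (hr2 : 0 ≤ r2) (hr3 : 0 ≤ r3)
    (hR1 : 0 ≤ R1) (hR2 : 0 ≤ R2) (hR3 : 0 ≤ R3)
    (hS12 : 0 ≤ S12) (hS13 : 0 ≤ S13) (hS23 : 0 ≤ S23)
    (hv : v1 ^ 2 + v2 ^ 2 + v3 ^ 2 = 1)
    (m1 m2 m3 f : ℝ → ℝ)
    (hm1 : ∀ k, m1 k = ρ1 * k - r1)
    (hm2 : ∀ k, m2 k = ρ2 * k - r2)
    (hm3 : ∀ k, m3 k = ρ3 * k - r3)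
    (hfdef : ∀ k, f k =
      m1 k * m2 k * m3 k
        - (m2 k * m3 k * R1 * v1 ^ 2 + m1 k * m3 k * R2 * v2 ^ 2
            + m1 k * m2 k * R3 * v3 ^ 2)
        - (m3 k * S12 * v1 ^ 2 * v2 ^ 2 + m2 k * S13 * v1 ^ 2 * v3 ^ 2
            + m1 k * S23 * v2 ^ 2 * v3 ^ 2))
    (hm1pos : 0 < m1 1) (hm2pos : 0 < m2 1) (hm3pos : 0 < m3 1)
    (hf1 : 0 ≤ f 1) :
    ∀ k > (1 : ℝ), 0 < f k :=
  stmt_4_general ρ1 ρ2 ρ3 r1 r2 r3 R1 R2 R3 S12 S13 S23 v1 v2 v3 hρ1 hρ2 hρ3 hR1 hR2 hR3 hS12 hS13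
    hS23 m1 m2 m3 f hm1 hm2 hm3 hfdef hm1pos hm2pos hm3pos hf1
end

section
/- Let ρ_a > 0 (a = 1,2,3), R_a > 0, S_{ab} ≥ 0, and for each a let r_a ∈ [r̄_1, r̄_3] with 0 < r̄_1 ≤ r̄_3. Set m̄_a(k) = ρ_a k − r_a and consider the cubic f(k) = m̄_1 m̄_2 m̄_3 − Σ_a (∏_{b≠a} m̄_b) R_a v̂_a² − Σ_{a<b} m̄_c S_{ab} v̂_a² v̂_b², with v̂ a unit vector with all v̂_a ≠ 0. Suppose f has one real root s_1 and a complex-conjugate pair s_{2,3} = k_R ± i k_I with k_I ≠ 0. If ρ_a k_R − r̄_3 > 0 for all a, then the imaginary part of G(s_2) := 1 − Σ_a R_a v̂_a²/m̄_a(s_2) − Σ_{a<b} S_{ab} v̂_a² v̂_b²/(m̄_a(s_2) m̄_b(s_2)) is nonzero, contradicting f(s_2) = 0; hence all three roots of f are real. -/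
/-!
Divide the cubic by `m̄₁ m̄₂ m̄₃`: at a root `z` off the real axis the quotient
`G = 1 - Σ A_a / m̄_a - Σ B_ab / (m̄_a m̄_b)` must vanish. At `z = k_R + i k_I` every `m̄_a`
has positive real part and imaginary part `ρ_a k_I`, so all `m̄_a` and all products
`m̄_a m̄_b` lie in the same open half-plane as `i k_I`; their inverses lie in the opposite one.
With `A_a = R_a v̂_a² > 0` and `B_ab = S_ab v̂_a² v̂_b² ≥ 0` this puts `G` strictly in the
half-plane of `i k_I`, so `G ≠ 0`.
-/

namespace Complex

lemma mul_inv_im_neg {t : ℝ} {w : ℂ} (h : 0 < t * w.im) : t * w⁻¹.im < 0 := by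
  have hw : 0 < normSq w := normSq_pos.2 fun hw ↦ by simp [hw] at h
  rw [inv_im, mul_div_assoc', mul_neg]
  exact div_neg_of_neg_of_pos (neg_neg_of_pos h) hw

lemma mul_im_mul_pos {t : ℝ} {w z : ℂ} (hw : 0 < w.re) (hz : 0 < z.re)
    (htw : 0 < t * w.im) (htz : 0 < t * z.im) : 0 < t * (w * z).im := by
  have : t * (w * z).im = w.re * (t * z.im) + z.re * (t * w.im) := by rw [mul_im]; ring
  rw [this]
  positivity

end Complex

section CharacteristicCubic

variable {K : Type*} [Field K]

def charCubic (A₁ A₂ A₃ B₁₂ B₁₃ B₂₃ m₁ m₂ m₃ : K) : K :=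
  m₁ * m₂ * m₃ - (m₂ * m₃ * A₁ + m₁ * m₃ * A₂ + m₁ * m₂ * A₃)
    - (m₃ * B₁₂ + m₂ * B₁₃ + m₁ * B₂₃)

/-- The characteristic cubic divided by `m₁ m₂ m₃` (the function `G` of the paper). -/
def charRatio (A₁ A₂ A₃ B₁₂ B₁₃ B₂₃ m₁ m₂ m₃ : K) : K :=
  1 - (A₁ / m₁ + A₂ / m₂ + A₃ / m₃) - (B₁₂ / (m₁ * m₂) + B₁₃ / (m₁ * m₃) + B₂₃ / (m₂ * m₃))

lemma charCubic_eq_mul_charRatio (A₁ A₂ A₃ B₁₂ B₁₃ B₂₃ : K) {m₁ m₂ m₃ : K}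
    (h₁ : m₁ ≠ 0) (h₂ : m₂ ≠ 0) (h₃ : m₃ ≠ 0) :
    charCubic A₁ A₂ A₃ B₁₂ B₁₃ B₂₃ m₁ m₂ m₃
      = m₁ * m₂ * m₃ * charRatio A₁ A₂ A₃ B₁₂ B₁₃ B₂₃ m₁ m₂ m₃ := by
  unfold charCubic charRatio
  field_simp

end CharacteristicCubic

section HalfPlane

variable {t A₁ A₂ A₃ B₁₂ B₁₃ B₂₃ : ℝ} {m₁ m₂ m₃ : ℂ}

lemma mul_im_charRatio_pos (hA₁ : 0 < A₁) (hA₂ : 0 < A₂) (hA₃ : 0 < A₃)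
    (hB₁₂ : 0 ≤ B₁₂) (hB₁₃ : 0 ≤ B₁₃) (hB₂₃ : 0 ≤ B₂₃)
    (hre₁ : 0 < m₁.re) (hre₂ : 0 < m₂.re) (hre₃ : 0 < m₃.re)
    (him₁ : 0 < t * m₁.im) (him₂ : 0 < t * m₂.im) (him₃ : 0 < t * m₃.im) :
    0 < t * (charRatio (A₁ : ℂ) A₂ A₃ B₁₂ B₁₃ B₂₃ m₁ m₂ m₃).im := by
  have h₁ := Complex.mul_inv_im_neg him₁
  have h₂ := Complex.mul_inv_im_neg him₂
  have h₃ := Complex.mul_inv_im_neg him₃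
  have h₁₂ := Complex.mul_inv_im_neg (Complex.mul_im_mul_pos hre₁ hre₂ him₁ him₂)
  have h₁₃ := Complex.mul_inv_im_neg (Complex.mul_im_mul_pos hre₁ hre₃ him₁ him₃)
  have h₂₃ := Complex.mul_inv_im_neg (Complex.mul_im_mul_pos hre₂ hre₃ him₂ him₃)
  have expand : t * (charRatio (A₁ : ℂ) A₂ A₃ B₁₂ B₁₃ B₂₃ m₁ m₂ m₃).im
      = -(A₁ * (t * m₁⁻¹.im) + A₂ * (t * m₂⁻¹.im) + A₃ * (t * m₃⁻¹.im))
        - (B₁₂ * (t * (m₁ * m₂)⁻¹.im) + B₁₃ * (t * (m₁ * m₃)⁻¹.im)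
          + B₂₃ * (t * (m₂ * m₃)⁻¹.im)) := by
    simp only [charRatio, div_eq_mul_inv, Complex.sub_im, Complex.add_im, Complex.one_im,
      Complex.im_ofReal_mul]
    ring
  rw [expand]
  nlinarith [mul_nonpos_of_nonneg_of_nonpos hB₁₂ h₁₂.le,
    mul_nonpos_of_nonneg_of_nonpos hB₁₃ h₁₃.le, mul_nonpos_of_nonneg_of_nonpos hB₂₃ h₂₃.le]

lemma charCubic_ne_zero (hA₁ : 0 < A₁) (hA₂ : 0 < A₂) (hA₃ : 0 < A₃)
    (hB₁₂ : 0 ≤ B₁₂) (hB₁₃ : 0 ≤ B₁₃) (hB₂₃ : 0 ≤ B₂₃)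
    (hre₁ : 0 < m₁.re) (hre₂ : 0 < m₂.re) (hre₃ : 0 < m₃.re)
    (him₁ : 0 < t * m₁.im) (him₂ : 0 < t * m₂.im) (him₃ : 0 < t * m₃.im) :
    charCubic (A₁ : ℂ) A₂ A₃ B₁₂ B₁₃ B₂₃ m₁ m₂ m₃ ≠ 0 := by
  have ne_zero {m : ℂ} (hm : 0 < m.re) : m ≠ 0 := fun h ↦ by simp [h] at hm
  rw [charCubic_eq_mul_charRatio _ _ _ _ _ _ (ne_zero hre₁) (ne_zero hre₂) (ne_zero hre₃)]
  refine mul_ne_zero (by simp [ne_zero, hre₁, hre₂, hre₃]) fun hG ↦ ?_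
  have := mul_im_charRatio_pos hA₁ hA₂ hA₃ hB₁₂ hB₁₃ hB₂₃ hre₁ hre₂ hre₃ him₁ him₂ him₃
  simp [hG] at this

end HalfPlane

theorem stmt_6_general (ρ1 ρ2 ρ3 r1 r2 r3 rb1 rb3 R1 R2 R3 S12 S13 S23 v1 v2 v3
    s1 kR kI : ℝ)
    (hρ1 : 0 < ρ1) (hρ2 : 0 < ρ2) (hρ3 : 0 < ρ3)
    (hr1 : r1 ∈ Set.Icc rb1 rb3) (hr2 : r2 ∈ Set.Icc rb1 rb3)
    (hr3 : r3 ∈ Set.Icc rb1 rb3)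
    (hR1 : 0 < R1) (hR2 : 0 < R2) (hR3 : 0 < R3)
    (hS12 : 0 ≤ S12) (hS13 : 0 ≤ S13) (hS23 : 0 ≤ S23)
    (hv1 : v1 ≠ 0) (hv2 : v2 ≠ 0) (hv3 : v3 ≠ 0)
    (m1 m2 m3 f : ℂ → ℂ)
    (hm1 : ∀ z, m1 z = (ρ1 : ℂ) * z - (r1 : ℂ))
    (hm2 : ∀ z, m2 z = (ρ2 : ℂ) * z - (r2 : ℂ))
    (hm3 : ∀ z, m3 z = (ρ3 : ℂ) * z - (r3 : ℂ))
    (hfdef : ∀ z, f z =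
      m1 z * m2 z * m3 z
        - (m2 z * m3 z * (R1 : ℂ) * (v1 : ℂ) ^ 2
            + m1 z * m3 z * (R2 : ℂ) * (v2 : ℂ) ^ 2
            + m1 z * m2 z * (R3 : ℂ) * (v3 : ℂ) ^ 2)
        - (m3 z * (S12 : ℂ) * (v1 : ℂ) ^ 2 * (v2 : ℂ) ^ 2
            + m2 z * (S13 : ℂ) * (v1 : ℂ) ^ 2 * (v3 : ℂ) ^ 2
            + m1 z * (S23 : ℂ) * (v2 : ℂ) ^ 2 * (v3 : ℂ) ^ 2))
    -- `f` has the real root `s₁` and the complex-conjugate pair `k_R ± i k_I`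
    (hfact : ∀ z : ℂ, f z =
      ((ρ1 * ρ2 * ρ3 : ℝ) : ℂ) * (z - (s1 : ℂ)) *
        (z - ((kR : ℂ) + (kI : ℂ) * Complex.I)) *
        (z - ((kR : ℂ) - (kI : ℂ) * Complex.I)))
    (hkI : kI ≠ 0)
    (hkR : ρ1 * kR - rb3 > 0 ∧ ρ2 * kR - rb3 > 0 ∧ ρ3 * kR - rb3 > 0) :
    False := by
  obtain ⟨hkR1, hkR2, hkR3⟩ := hkR
  set z : ℂ := kR + kI * Complex.I
  have re_pos {ρ r : ℝ} (h : r < ρ * kR) : 0 < ((ρ : ℂ) * z - r).re := by simpa [z] using h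
  have im_pos {ρ r : ℝ} (hρ : 0 < ρ) : 0 < kI * ((ρ : ℂ) * z - r).im := by
    simpa [z, mul_left_comm kI, ← sq] using mul_pos hρ (sq_pos_of_ne_zero hkI)
  have hroot : f z = 0 := by rw [hfact, sub_self, mul_zero, zero_mul]
  have hcubic : f z = charCubic ((R1 * v1 ^ 2 : ℝ) : ℂ) ((R2 * v2 ^ 2 : ℝ) : ℂ)
      ((R3 * v3 ^ 2 : ℝ) : ℂ) ((S12 * v1 ^ 2 * v2 ^ 2 : ℝ) : ℂ) ((S13 * v1 ^ 2 * v3 ^ 2 : ℝ) : ℂ)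
      ((S23 * v2 ^ 2 * v3 ^ 2 : ℝ) : ℂ) (m1 z) (m2 z) (m3 z) := by
    rw [hfdef, charCubic]; push_cast; ring
  refine charCubic_ne_zero (t := kI) (by positivity) (by positivity) (by positivity)
    (by positivity) (by positivity) (by positivity) ?_ ?_ ?_ ?_ ?_ ?_ (hcubic ▸ hroot)
  · rw [hm1]; exact re_pos (by linarith [hr1.2])
  · rw [hm2]; exact re_pos (by linarith [hr2.2])
  · rw [hm3]; exact re_pos (by linarith [hr3.2])
  · rw [hm1]; exact im_pos hρ1
  · rw [hm2]; exact im_pos hρ2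
  · rw [hm3]; exact im_pos hρ3

/-- If the characteristic cubic `f` (with `ρ_a > 0`, `R_a > 0`,
`S_{ab} ≥ 0`, `r_a ∈ [r̄₁, r̄₃]`, `0 < r̄₁ ≤ r̄₃`, all `v̂_a ≠ 0`) had one real
root `s₁` and a genuinely complex conjugate pair `k_R ± i k_I` (`k_I ≠ 0`)
with `ρ_a k_R − r̄₃ > 0` for all `a`, then the imaginary part of `G` at the
complex root would be nonzero, contradicting `f = 0` there; hence this
situation is impossible (all three roots of `f` are real). -/
theorem stmt_6 (ρ1 ρ2 ρ3 r1 r2 r3 rb1 rb3 R1 R2 R3 S12 S13 S23 v1 v2 v3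
    s1 kR kI : ℝ)
    (hρ1 : 0 < ρ1) (hρ2 : 0 < ρ2) (hρ3 : 0 < ρ3)
    (hrb : 0 < rb1) (hrb13 : rb1 ≤ rb3)
    (hr1 : r1 ∈ Set.Icc rb1 rb3) (hr2 : r2 ∈ Set.Icc rb1 rb3)
    (hr3 : r3 ∈ Set.Icc rb1 rb3)
    (hR1 : 0 < R1) (hR2 : 0 < R2) (hR3 : 0 < R3)
    (hS12 : 0 ≤ S12) (hS13 : 0 ≤ S13) (hS23 : 0 ≤ S23)
    (hv : v1 ^ 2 + v2 ^ 2 + v3 ^ 2 = 1)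
    (hv1 : v1 ≠ 0) (hv2 : v2 ≠ 0) (hv3 : v3 ≠ 0)
    (m1 m2 m3 f : ℂ → ℂ)
    (hm1 : ∀ z, m1 z = (ρ1 : ℂ) * z - (r1 : ℂ))
    (hm2 : ∀ z, m2 z = (ρ2 : ℂ) * z - (r2 : ℂ))
    (hm3 : ∀ z, m3 z = (ρ3 : ℂ) * z - (r3 : ℂ))
    (hfdef : ∀ z, f z =
      m1 z * m2 z * m3 z
        - (m2 z * m3 z * (R1 : ℂ) * (v1 : ℂ) ^ 2
            + m1 z * m3 z * (R2 : ℂ) * (v2 : ℂ) ^ 2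
            + m1 z * m2 z * (R3 : ℂ) * (v3 : ℂ) ^ 2)
        - (m3 z * (S12 : ℂ) * (v1 : ℂ) ^ 2 * (v2 : ℂ) ^ 2
            + m2 z * (S13 : ℂ) * (v1 : ℂ) ^ 2 * (v3 : ℂ) ^ 2
            + m1 z * (S23 : ℂ) * (v2 : ℂ) ^ 2 * (v3 : ℂ) ^ 2))
    -- `f` has the real root `s₁` and the complex-conjugate pair `k_R ± i k_I`
    (hfact : ∀ z : ℂ, f z =
      ((ρ1 * ρ2 * ρ3 : ℝ) : ℂ) * (z - (s1 : ℂ)) *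
        (z - ((kR : ℂ) + (kI : ℂ) * Complex.I)) *
        (z - ((kR : ℂ) - (kI : ℂ) * Complex.I)))
    (hkI : kI ≠ 0)
    (hkR : ρ1 * kR - rb3 > 0 ∧ ρ2 * kR - rb3 > 0 ∧ ρ3 * kR - rb3 > 0) :
    False :=
  stmt_6_general ρ1 ρ2 ρ3 r1 r2 r3 rb1 rb3 R1 R2 R3 S12 S13 S23 v1 v2 v3 s1 kR kI hρ1 hρ2 hρ3 hr1
    hr2 hr3 hR1 hR2 hR3 hS12 hS13 hS23 hv1 hv2 hv3 m1 m2 m3 f hm1 hm2 hm3 hfdef hfact hkI hkR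
end

section
/- Insufficiency construction, key inequality: let ρ_a = ε+P+Π+Λ_a > 0, define m̃_a = ρ_a − (2η+λ_{πΠ}Π)/(2τ_π) − τ_{ππ}Λ_a/(2τ_π), R_a = (1/(6τ_π))(2η+λ_{πΠ}Π+(τ_{ππ}/2)Λ_a) + (ζ+λ_{Ππ}Λ_a)/τ_Π + ρ_a c_s², with m̃_{a_1} = R_{a_1} for some index a_1 minimizing m̃_d − R_d, and suppose 1 − c_s² − τ_{ππ}/(3τ_π) − λ_{Ππ}/τ_Π < 0 and Λ_{a_2} > Λ_{a_1}. Then 1 − R_{a_2}/m̄⁰_{a_2}(1) = (Λ_{a_2}−Λ_{a_1})(1 − c_s² − τ_{ππ}/(3τ_π) − λ_{Ππ}/τ_Π)/m̄⁰_{a_2}(1) < 0, where m̄⁰_{a_2}(1) = m̃_{a_1} + (Λ_{a_2}−Λ_{a_1})(1 − τ_{ππ}/(4τ_π)) > 0. -/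
/-!
Both `R_a` and `m̄⁰_{a₂}(1)` are affine in `Λ`. Writing `R_{a₂}` as `R_{a₁}` plus its increment and
using `m̃_{a₁} = R_{a₁}`, the gap `m̄⁰_{a₂}(1) − R_{a₂}` is `(Λ_{a₂} − Λ_{a₁})` times the coefficient
`1 − c_s² − τ_{ππ}/(3τ_π) − λ_{Ππ}/τ_Π` (since `1/4 + 1/12 = 1/3`), which is negative; dividing by
`m̄⁰_{a₂}(1) > 0` gives both claims.
-/

namespace Insufficiency

variable (ε P Pb η lπPb τππ τπ ζ lBπ τB cs2 : ℝ)

def rho (La : ℝ) : ℝ := ε + P + Pb + La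

noncomputable def mTilde (La : ℝ) : ℝ :=
  rho ε P Pb La - (2 * η + lπPb * Pb) / (2 * τπ) - τππ * La / (2 * τπ)

noncomputable def R (La : ℝ) : ℝ :=
  (1 / (6 * τπ)) * (2 * η + lπPb * Pb + (τππ / 2) * La) + (ζ + lBπ * La) / τB
    + rho ε P Pb La * cs2

noncomputable def mBar0 (La1 La2 : ℝ) : ℝ :=
  mTilde ε P Pb η lπPb τππ τπ La1 + (La2 - La1) * (1 - τππ / (4 * τπ))

theorem R_eq_R_add (La1 La2 : ℝ) :
    R ε P Pb η lπPb τππ τπ ζ lBπ τB cs2 La2 =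
      R ε P Pb η lπPb τππ τπ ζ lBπ τB cs2 La1
        + (La2 - La1) * (cs2 + τππ / (12 * τπ) + lBπ / τB) := by
  unfold R rho
  ring

theorem mBar0_sub_R_of_mTilde_eq_R {La1 : ℝ} (La2 : ℝ)
    (h : mTilde ε P Pb η lπPb τππ τπ La1 = R ε P Pb η lπPb τππ τπ ζ lBπ τB cs2 La1) :
    mBar0 ε P Pb η lπPb τππ τπ La1 La2 - R ε P Pb η lπPb τππ τπ ζ lBπ τB cs2 La2 =
      (La2 - La1) * (1 - cs2 - τππ / (3 * τπ) - lBπ / τB) := by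
  rw [R_eq_R_add (La1 := La1), mBar0, h]
  ring

end Insufficiency

open Insufficiency in
theorem stmt_15_general (ε P Pb η lπPb τππ τπ ζ lBπ τB cs2 La1 La2 : ℝ)
    (hEq : (ε + P + Pb + La1) - (2 * η + lπPb * Pb) / (2 * τπ)
        - τππ * La1 / (2 * τπ)
      = (1 / (6 * τπ)) * (2 * η + lπPb * Pb + (τππ / 2) * La1)
        + (ζ + lBπ * La1) / τB + (ε + P + Pb + La1) * cs2)
    (hneg : 1 - cs2 - τππ / (3 * τπ) - lBπ / τB < 0)
    (hΛ : La2 > La1)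
    (hm0 : 0 < ((ε + P + Pb + La1) - (2 * η + lπPb * Pb) / (2 * τπ)
        - τππ * La1 / (2 * τπ)) + (La2 - La1) * (1 - τππ / (4 * τπ))) :
    (1 - ((1 / (6 * τπ)) * (2 * η + lπPb * Pb + (τππ / 2) * La2)
          + (ζ + lBπ * La2) / τB + (ε + P + Pb + La2) * cs2)
        / (((ε + P + Pb + La1) - (2 * η + lπPb * Pb) / (2 * τπ)
            - τππ * La1 / (2 * τπ)) + (La2 - La1) * (1 - τππ / (4 * τπ)))
      = (La2 - La1) * (1 - cs2 - τππ / (3 * τπ) - lBπ / τB)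
        / (((ε + P + Pb + La1) - (2 * η + lπPb * Pb) / (2 * τπ)
            - τππ * La1 / (2 * τπ)) + (La2 - La1) * (1 - τππ / (4 * τπ)))) ∧
    (1 - ((1 / (6 * τπ)) * (2 * η + lπPb * Pb + (τππ / 2) * La2)
          + (ζ + lBπ * La2) / τB + (ε + P + Pb + La2) * cs2)
        / (((ε + P + Pb + La1) - (2 * η + lπPb * Pb) / (2 * τπ)
            - τππ * La1 / (2 * τπ)) + (La2 - La1) * (1 - τππ / (4 * τπ)))
      < 0) := by
  have hm : 0 < mBar0 ε P Pb η lπPb τππ τπ La1 La2 := hm0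
  have hgap := mBar0_sub_R_of_mTilde_eq_R ε P Pb η lπPb τππ τπ ζ lBπ τB cs2 La2 hEq
  have hval : 1 - R ε P Pb η lπPb τππ τπ ζ lBπ τB cs2 La2 / mBar0 ε P Pb η lπPb τππ τπ La1 La2 =
      (La2 - La1) * (1 - cs2 - τππ / (3 * τπ) - lBπ / τB) / mBar0 ε P Pb η lπPb τππ τπ La1 La2 := by
    rw [one_sub_div hm.ne', hgap]
  exact ⟨hval, hval ▸ div_neg_of_neg_of_pos (mul_neg_of_pos_of_neg (sub_pos.2 hΛ) hneg) hm⟩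

/-- Insufficiency construction, key inequality. With
`ρ_a = ε+P+Π+Λ_a > 0`,
`m̃_a = ρ_a − (2η+λ_{πΠ}Π)/(2τ_π) − τ_{ππ}Λ_a/(2τ_π)`,
`R_a = (1/(6τ_π))(2η+λ_{πΠ}Π+(τ_{ππ}/2)Λ_a) + (ζ+λ_{Ππ}Λ_a)/τ_Π + ρ_a c_s²`,
if `m̃_{a₁} = R_{a₁}`, `1 − c_s² − τ_{ππ}/(3τ_π) − λ_{Ππ}/τ_Π < 0`,
`Λ_{a₂} > Λ_{a₁}`, and `m̄⁰_{a₂}(1) = m̃_{a₁} + (Λ_{a₂}−Λ_{a₁})(1 − τ_{ππ}/(4τ_π)) > 0`,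
then `1 − R_{a₂}/m̄⁰_{a₂}(1) = (Λ_{a₂}−Λ_{a₁})(1 − c_s² − τ_{ππ}/(3τ_π) − λ_{Ππ}/τ_Π)/m̄⁰_{a₂}(1) < 0`.
Here `Pb` denotes `Π`, `lπPb` denotes `λ_{πΠ}`, `lBπ` denotes `λ_{Ππ}`,
and `τB` denotes `τ_Π`. -/
theorem stmt_15 (ε P Pb η lπPb τππ τπ ζ lBπ τB cs2 La1 La2 : ℝ)
    (hτπ : 0 < τπ) (hτB : 0 < τB)
    (hη : 0 ≤ η) (hζ : 0 ≤ ζ) (hτππ : 0 ≤ τππ) (hlπ : 0 ≤ lπPb)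
    (hlB : 0 ≤ lBπ) (hcs : 0 ≤ cs2)
    (hρ1 : 0 < ε + P + Pb + La1) (hρ2 : 0 < ε + P + Pb + La2)
    (hEq : (ε + P + Pb + La1) - (2 * η + lπPb * Pb) / (2 * τπ)
        - τππ * La1 / (2 * τπ)
      = (1 / (6 * τπ)) * (2 * η + lπPb * Pb + (τππ / 2) * La1)
        + (ζ + lBπ * La1) / τB + (ε + P + Pb + La1) * cs2)
    (hneg : 1 - cs2 - τππ / (3 * τπ) - lBπ / τB < 0)
    (hΛ : La2 > La1)
    (hm0 : 0 < ((ε + P + Pb + La1) - (2 * η + lπPb * Pb) / (2 * τπ)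
        - τππ * La1 / (2 * τπ)) + (La2 - La1) * (1 - τππ / (4 * τπ))) :
    (1 - ((1 / (6 * τπ)) * (2 * η + lπPb * Pb + (τππ / 2) * La2)
          + (ζ + lBπ * La2) / τB + (ε + P + Pb + La2) * cs2)
        / (((ε + P + Pb + La1) - (2 * η + lπPb * Pb) / (2 * τπ)
            - τππ * La1 / (2 * τπ)) + (La2 - La1) * (1 - τππ / (4 * τπ)))
      = (La2 - La1) * (1 - cs2 - τππ / (3 * τπ) - lBπ / τB)
        / (((ε + P + Pb + La1) - (2 * η + lπPb * Pb) / (2 * τπ)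
            - τππ * La1 / (2 * τπ)) + (La2 - La1) * (1 - τππ / (4 * τπ)))) ∧
    (1 - ((1 / (6 * τπ)) * (2 * η + lπPb * Pb + (τππ / 2) * La2)
          + (ζ + lBπ * La2) / τB + (ε + P + Pb + La2) * cs2)
        / (((ε + P + Pb + La1) - (2 * η + lπPb * Pb) / (2 * τπ)
            - τππ * La1 / (2 * τπ)) + (La2 - La1) * (1 - τππ / (4 * τπ)))
      < 0) :=
  stmt_15_general ε P Pb η lπPb τππ τπ ζ lBπ τB cs2 La1 La2 hEq hneg hΛ hm0
end
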